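/- arXiv:2405.05268 — 2 statements merged into one kernel-verified Lean document; each statement's English description precedes it below -/
import Mathlib

section
/- For every integer k ≥ 1 and every positive integer n, the (2k+1)-st Bernoulli polynomial satisfies B_{2k+1}(n) = ((2k+1) / 2^(2k)) · Σ_{m=1}^{k} R(k,m) · C(2n+m-1, 2m+1), as an identity of rational numbers. -/
/-- `R k m = ∑_{j=0}^m (-1)^j C(2m, j) (m-j)^{2k}`, the sequence A304330. -/
def R (k m : ℕ) : ℤ :=
  ∑ j ∈ Finset.range (m + 1),
    (-1 : ℤ) ^ j * ((2 * m).choose j : ℤ) * (((m - j) ^ (2 * k) : ℕ) : ℤ)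

/-!
Since `B_{2k+1} = 0`, Faulhaber's formula gives `B_{2k+1}(n) = (2k+1) ∑_{t<n} t^{2k}`, so it
suffices to write `(2t)^{2k}` in a basis whose sums over `t < n` telescope. That basis is
`c_m(x) = C(x+m, 2m) + C(x+m-1, 2m)`, equal to `2x² ∏_{0<i<m} (x² - i²) / (2m)!` for `m ≥ 1`,
so that `x² c_m = m² c_m + (2m+2)(2m+1) c_{m+1}`. Dually,
`R(k+1, m+1) = (m+1)² R(k, m+1) + (2m+2)(2m+1) R(k, m)`, and induction on `k` gives
`x^{2k} = ∑_{m ≤ k} R(k, m) c_m(x)`; the term that would spill over, `R(k, k+1)`, vanishes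
because `2 R(k, m)` is the `2m`-th central difference of `x^{2k}` at `0`. Finally
`c_m(2t) = C(2t+m+1, 2m+1) - C(2t+m-1, 2m+1)`, so `∑_{t<n} c_m(2t) = C(2n+m-1, 2m+1)`.
-/

open Finset

theorem R_eq_sum_intCast (k m : ℕ) :
    R k m = ∑ j ∈ range (m + 1),
      (-1 : ℤ) ^ j * ((2 * m).choose j : ℤ) * ((m : ℤ) - j) ^ (2 * k) :=
  sum_congr rfl fun j hj => by rw [Nat.cast_pow, Nat.cast_sub (mem_range_succ_iff.mp hj)]

theorem R_zero_right {k : ℕ} (hk : k ≠ 0) : R k 0 = 0 := by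
  simp [R, hk]

theorem Nat.add_two_choose_succ_mul_succ_mul_sub (n j : ℕ) :
    (n + 2).choose (j + 1) * (j + 1) * (n + 1 - j) = (n + 2) * (n + 1) * n.choose j := by
  rw [mul_assoc (n + 2), Nat.add_one_mul_choose_eq, ← mul_assoc, mul_comm (n + 2),
    Nat.choose_mul_succ_eq (n + 1) (j + 1), show n + 1 + 1 - (j + 1) = n + 1 - j by omega]
  ring

theorem R_succ_succ (k m : ℕ) :
    R (k + 1) (m + 1) = (m + 1) ^ 2 * R k (m + 1) + (2 * m + 2) * (2 * m + 1) * R k m := by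
  have hterm : ∀ j ∈ range (m + 1),
      (-1 : ℤ) ^ (j + 1) * ((2 * (m + 1)).choose (j + 1) : ℤ) *
          (((m + 1 : ℕ) : ℤ) - (j + 1 : ℕ)) ^ (2 * (k + 1))
        = (m + 1) ^ 2 * ((-1 : ℤ) ^ (j + 1) * ((2 * (m + 1)).choose (j + 1) : ℤ) *
            (((m + 1 : ℕ) : ℤ) - (j + 1 : ℕ)) ^ (2 * k))
          + (2 * m + 2) * (2 * m + 1) *
            ((-1 : ℤ) ^ j * ((2 * m).choose j : ℤ) * ((m : ℤ) - j) ^ (2 * k)) := by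
    intro j hj
    have hj : j ≤ 2 * m + 1 := by have := mem_range.mp hj; omega
    have h := congrArg (Nat.cast (R := ℤ)) (Nat.add_two_choose_succ_mul_succ_mul_sub (2 * m) j)
    push_cast [Nat.cast_sub hj] at h ⊢
    linear_combination (-1 : ℤ) ^ j * ((m : ℤ) - j) ^ (2 * k) * h
  simp only [R_eq_sum_intCast]
  rw [sum_range_succ' _ (m + 1), sum_range_succ' _ (m + 1), sum_congr rfl hterm,
    sum_add_distrib, ← mul_sum, ← mul_sum]
  simp only [Nat.cast_add, Nat.cast_one, add_sub_add_right_eq_sub, pow_zero,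
    Nat.choose_zero_right, mul_one, CharP.cast_eq_zero, sub_zero, one_mul]
  ring

theorem two_mul_R_eq_sum {k : ℕ} (hk : k ≠ 0) (m : ℕ) :
    2 * R k m = ∑ j ∈ range (2 * m + 1),
      (-1 : ℤ) ^ j * ((2 * m).choose j : ℤ) * ((m : ℤ) - j) ^ (2 * k) := by
  rw [R_eq_sum_intCast]
  set f : ℕ → ℤ := fun j => (-1) ^ j * ((2 * m).choose j : ℤ) * ((m : ℤ) - j) ^ (2 * k)
  change 2 * ∑ j ∈ range (m + 1), f j = ∑ j ∈ range (2 * m + 1), f j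
  have hsymm : ∀ i l, i + l = 2 * m → f l = f i := by
    intro i l hil
    have hsign : (-1 : ℤ) ^ l = (-1) ^ i := neg_one_pow_congr (by grind)
    have hbase : (m : ℤ) - l = -((m : ℤ) - i) := by
      have : (i : ℤ) + l = 2 * m := by exact_mod_cast hil
      linear_combination -this
    have hchoose : (i + l).choose l = (i + l).choose i := Nat.choose_symm_add.symm
    simp only [f, hsign, hbase, Even.neg_pow (even_two_mul k), ← hil, hchoose]
  have hreflect : ∑ j ∈ range m, f (m + 1 + j) = ∑ j ∈ range m, f j := by
    rw [← sum_range_reflect f m]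
    exact sum_congr rfl fun j hj => hsymm _ _ (by have := mem_range.mp hj; omega)
  have hmid : f m = 0 := by simp [f, hk]
  rw [show 2 * m + 1 = m + 1 + m by ring, sum_range_add f (m + 1) m, hreflect,
    sum_range_succ, hmid, add_zero]
  ring

theorem R_eq_zero_of_lt {k m : ℕ} (hk : k ≠ 0) (hkm : k < m) : R k m = 0 := by
  have h := congrFun (fwdDiff_iter_pow_eq_zero_of_lt (R := ℤ) (show 2 * k < 2 * m by omega)) (-m)
  rw [fwdDiff_iter_eq_sum_shift, Pi.zero_apply] at h
  suffices 2 * R k m = 0 by omega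
  rw [two_mul_R_eq_sum hk, ← h]
  refine sum_congr rfl fun j hj => ?_
  have hsign : (-1 : ℤ) ^ (2 * m - j) = (-1) ^ j :=
    neg_one_pow_congr (by have := mem_range.mp hj; grind)
  rw [smul_eq_mul, hsign, nsmul_one, ← Even.neg_pow (even_two_mul k)]
  ring_nf

section CentralPochhammer

variable (S : Type*) [CommRing S]

noncomputable def centralPochhammer (m : ℕ) (y : S) : S :=
  (descPochhammer S (2 * m)).eval (y + m) + (descPochhammer S (2 * m)).eval (y + m - 1)

variable {S}

theorem descPochhammer_eval_mul_sub (r : ℕ) (z : S) :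
    (descPochhammer S r).eval z * (z - r) = z * (descPochhammer S r).eval (z - 1) := by
  rw [← descPochhammer_succ_eval, descPochhammer_succ_left]
  simp

theorem centralPochhammer_succ (m : ℕ) (y : S) :
    centralPochhammer S (m + 1) y = (y ^ 2 - m ^ 2) * centralPochhammer S m y := by
  open Polynomial in
  have hleft : ∀ z : S, (descPochhammer S (2 * (m + 1))).eval z
      = z * (descPochhammer S (2 * m)).eval (z - 1) * (z - 1 - (2 * m : ℕ)) := by
    intro z
    rw [show 2 * (m + 1) = 2 * m + 1 + 1 by ring, descPochhammer_succ_left, eval_mul, eval_X,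
      eval_comp, eval_sub, eval_X, eval_one, descPochhammer_succ_eval, mul_assoc]
  have hshift := descPochhammer_eval_mul_sub (2 * m) (y + m)
  have hsucc : y + ((m + 1 : ℕ) : S) - 1 = y + m := by push_cast; ring
  simp only [centralPochhammer, hleft, hsucc]
  push_cast at hshift ⊢
  linear_combination hshift

end CentralPochhammer

def centralChoose (m x : ℕ) : ℕ :=
  (x + m).choose (2 * m) + (x + m - 1).choose (2 * m)

theorem factorial_mul_centralChoose (m x : ℕ) :
    ((2 * m).factorial * centralChoose m x : ℤ) = centralPochhammer ℤ m x := by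
  rcases Nat.eq_zero_or_pos m with rfl | hm
  · simp [centralChoose, centralPochhammer]
  have hcast (a : ℕ) :
      ((2 * m).factorial * a.choose (2 * m) : ℤ) = (descPochhammer ℤ (2 * m)).eval ↑a := by
    rw [descPochhammer_eval_eq_descFactorial, Nat.descFactorial_eq_factorial_mul_choose]
    push_cast
    ring
  rw [centralChoose, Nat.cast_add, mul_add, hcast, hcast, centralPochhammer,
    Nat.cast_sub (by omega : 1 ≤ x + m)]
  push_cast
  ring

theorem sq_mul_centralChoose (m x : ℕ) :
    (x : ℤ) ^ 2 * centralChoose m x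
      = m ^ 2 * centralChoose m x + (2 * m + 2) * (2 * m + 1) * centralChoose (m + 1) x := by
  have hfac : ((2 * (m + 1)).factorial : ℤ) = (2 * m + 2) * (2 * m + 1) * (2 * m).factorial := by
    rw [show 2 * (m + 1) = 2 * m + 1 + 1 by ring, Nat.factorial_succ, Nat.factorial_succ]
    push_cast
    ring
  have hstep := centralPochhammer_succ m (x : ℤ)
  rw [← factorial_mul_centralChoose, ← factorial_mul_centralChoose, hfac] at hstep
  have hfac_ne : ((2 * m).factorial : ℤ) ≠ 0 := Nat.cast_ne_zero.mpr (Nat.factorial_ne_zero _)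
  refine mul_left_cancel₀ hfac_ne ?_
  linear_combination -hstep

theorem pow_eq_sum_R_mul_centralChoose {k : ℕ} (hk : k ≠ 0) (x : ℕ) :
    (x : ℤ) ^ (2 * k) = ∑ m ∈ range (k + 1), R k m * centralChoose m x := by
  induction k with
  | zero => exact absurd rfl hk
  | succ k ih =>
    rcases eq_or_ne k 0 with rfl | hk
    · have hR : R 1 1 = 1 := by decide
      have hc : (centralChoose 1 x : ℤ) = x ^ 2 := by
        have hc0 : centralChoose 0 x = 2 := by simp [centralChoose]
        have := sq_mul_centralChoose 0 x
        rw [hc0] at this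
        push_cast at this
        linarith
      rw [zero_add, sum_range_succ, sum_range_one, R_zero_right one_ne_zero, hR, hc]
      ring
    have hstep (m : ℕ) : (x : ℤ) ^ 2 * (R k m * centralChoose m x)
        = m ^ 2 * R k m * centralChoose m x
          + (2 * m + 2) * (2 * m + 1) * R k m * centralChoose (m + 1) x := by
      linear_combination R k m * sq_mul_centralChoose m x
    calc (x : ℤ) ^ (2 * (k + 1))
        = (x : ℤ) ^ 2 * ∑ m ∈ range (k + 1), R k m * centralChoose m x := by
          rw [← ih hk]
          ring
      _ = ∑ m ∈ range (k + 1 + 1), m ^ 2 * R k m * centralChoose m x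
          + ∑ m ∈ range (k + 1),
              (2 * m + 2) * (2 * m + 1) * R k m * centralChoose (m + 1) x := by
          rw [mul_sum, sum_congr rfl fun m _ => hstep m, sum_add_distrib,
            sum_range_succ _ (k + 1), R_eq_zero_of_lt hk k.lt_succ_self, mul_zero, zero_mul,
            add_zero]
      _ = ∑ m ∈ range (k + 1), R (k + 1) (m + 1) * centralChoose (m + 1) x := by
          rw [sum_range_succ']
          simp only [CharP.cast_eq_zero, zero_pow two_ne_zero, zero_mul, add_zero]
          rw [← sum_add_distrib]
          refine sum_congr rfl fun m _ => ?_
          rw [R_succ_succ]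
          push_cast
          ring
      _ = ∑ m ∈ range (k + 1 + 1), R (k + 1) m * centralChoose m x := by
          rw [sum_range_succ' _ (k + 1), R_zero_right k.succ_ne_zero, zero_mul, add_zero]

theorem sum_centralChoose_two_mul {m : ℕ} (hm : m ≠ 0) (n : ℕ) :
    ∑ t ∈ range n, centralChoose m (2 * t) = (2 * n + m - 1).choose (2 * m + 1) := by
  obtain ⟨q, rfl⟩ := Nat.exists_eq_add_one_of_ne_zero hm
  induction n with
  | zero => exact (Nat.choose_eq_zero_of_lt (by omega)).symm
  | succ n ih =>
    rw [sum_range_succ, ih, centralChoose,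
      show 2 * (n + 1) + (q + 1) - 1 = 2 * n + q + 1 + 1 by omega,
      show 2 * n + (q + 1) - 1 = 2 * n + q by omega, show 2 * n + (q + 1) = 2 * n + q + 1 by omega,
      show 2 * (q + 1) = 2 * q + 2 by omega, Nat.choose_succ_succ' (2 * n + q + 1) (2 * q + 2),
      Nat.choose_succ_succ' (2 * n + q) (2 * q + 2)]
    ring

theorem sum_R_mul_choose {k : ℕ} (hk : k ≠ 0) (n : ℕ) :
    ∑ m ∈ Icc 1 k, R k m * ((2 * n + m - 1).choose (2 * m + 1) : ℤ)
      = ∑ t ∈ range n, ((2 * t : ℕ) : ℤ) ^ (2 * k) := by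
  calc ∑ m ∈ Icc 1 k, R k m * ((2 * n + m - 1).choose (2 * m + 1) : ℤ)
      = ∑ m ∈ Icc 1 k, ∑ t ∈ range n, R k m * centralChoose m (2 * t) := by
        refine sum_congr rfl fun m hm => ?_
        rw [← sum_centralChoose_two_mul (by simp only [mem_Icc] at hm; omega), Nat.cast_sum,
          mul_sum]
    _ = ∑ m ∈ range (k + 1), ∑ t ∈ range n, R k m * centralChoose m (2 * t) := by
        refine sum_subset (fun m hm => ?_) fun m hmk hm => ?_
        · simp only [mem_Icc, mem_range] at hm ⊢
          omega
        · obtain rfl : m = 0 := by simp only [mem_Icc, mem_range] at hmk hm; omega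
          simp [R_zero_right hk]
    _ = ∑ t ∈ range n, ((2 * t : ℕ) : ℤ) ^ (2 * k) := by
        simp only [pow_eq_sum_R_mul_centralChoose hk]
        exact sum_comm

theorem Polynomial.bernoulli_two_mul_add_one_eval {k : ℕ} (hk : k ≠ 0) (n : ℕ) :
    (bernoulli (2 * k + 1)).eval (n : ℚ)
      = (2 * k + 1) * ∑ t ∈ range n, (t : ℚ) ^ (2 * k) := by
  rw [bernoulli_succ_eval, Nat.succ_eq_add_one,
    _root_.bernoulli_eq_zero_of_odd (odd_two_mul_add_one k) (by omega)]
  push_cast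
  ring

theorem stmt_8_general (k n : ℕ) (hk : 1 ≤ k) :
    (Polynomial.bernoulli (2 * k + 1)).eval (n : ℚ) =
      ((2 * k + 1 : ℚ) / 2 ^ (2 * k)) *
        ∑ m ∈ Finset.Icc 1 k, (R k m : ℚ) * ((2 * n + m - 1).choose (2 * m + 1) : ℚ) := by
  have hk0 : k ≠ 0 := Nat.one_le_iff_ne_zero.mp hk
  have hsum : ∑ m ∈ Icc 1 k, (R k m : ℚ) * ((2 * n + m - 1).choose (2 * m + 1) : ℚ)
      = 2 ^ (2 * k) * ∑ t ∈ range n, (t : ℚ) ^ (2 * k) := by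
    have h := congrArg (Int.cast : ℤ → ℚ) (sum_R_mul_choose hk0 n)
    push_cast at h
    simp only [h, mul_sum, mul_pow]
  rw [Polynomial.bernoulli_two_mul_add_one_eval hk0, hsum]
  field_simp

theorem stmt_8 (k n : ℕ) (hk : 1 ≤ k) (hn : 1 ≤ n) :
    (Polynomial.bernoulli (2 * k + 1)).eval (n : ℚ) =
      ((2 * k + 1 : ℚ) / 2 ^ (2 * k)) *
        ∑ m ∈ Finset.Icc 1 k, (R k m : ℚ) * ((2 * n + m - 1).choose (2 * m + 1) : ℚ) :=
  stmt_8_general k n hk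
end

section
/- For every integer k ≥ 1 and every positive integer n, 2^(2k-1) · S_{2k-1}(n) = Σ_{m=1}^{k} R(k,m) · F_m(n) / m, as an identity of rational numbers, where F_m(n) = Σ_{i=1}^{n} C(2i+m-1, 2m-1). -/
open Finset Polynomial

/-- `S k n = 1^k + 2^k + ⋯ + n^k`, the sum of the `k`-th powers of the first `n`
positive integers. -/
def S (k n : ℕ) : ℕ := ∑ i ∈ Finset.Icc 1 n, i ^ k

/-- `F m n = ∑_{i=1}^n C(2i+m-1, 2m-1)`. -/
def F (m n : ℕ) : ℕ := ∑ i ∈ Finset.Icc 1 n, (2 * i + m - 1).choose (2 * m - 1)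



lemma R_int (k m : ℕ) :
    R k m = ∑ j ∈ Finset.range (m+1),
      (-1 : ℤ)^j * ((2*m).choose j : ℤ) * ((m : ℤ) - j)^(2*k) := by
  unfold R
  refine Finset.sum_congr rfl fun j hj => ?_
  have hjm : j ≤ m := by simpa [Nat.lt_succ_iff] using hj
  push_cast [Nat.cast_sub hjm]
  ring

lemma R_zero (k : ℕ) (hk : 1 ≤ k) : R k 0 = 0 := by
  have h : (0:ℕ)^(2*k) = 0 := Nat.zero_pow (by omega)
  simp [R, h]

lemma R_one_one : R 1 1 = 1 := by
  simp [R, Finset.sum_range_succ]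

lemma choose_aux (t j : ℕ) :
    (2*t+2).choose (j+1) * (j+1) * (2*t+1-j) = (2*t+2) * ((2*t+1) * (2*t).choose j) := by
  have h1 : (2*t+2) * ((2*t+1).choose j) = (2*t+2).choose (j+1) * (j+1) := by
    simpa using Nat.add_one_mul_choose_eq (2*t+1) j
  have h2 : (2*t).choose j * (2*t+1) = (2*t+1).choose j * (2*t+1-j) := by
    simpa using Nat.choose_mul_succ_eq (2*t) j
  calc (2*t+2).choose (j+1) * (j+1) * (2*t+1-j)
      = (2*t+2) * ((2*t+1).choose j * (2*t+1-j)) := by rw [← h1]; ring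
    _ = (2*t+2) * ((2*t).choose j * (2*t+1)) := by rw [← h2]
    _ = (2*t+2) * ((2*t+1) * (2*t).choose j) := by ring

lemma R_rec (k t : ℕ) :
    R (k+1) (t+1) = 2*((t:ℤ)+1)*(2*(t:ℤ)+1) * R k t + ((t:ℤ)+1)^2 * R k (t+1) := by
  rw [R_int, R_int, R_int]
  push_cast
  have expand : ∀ j ∈ Finset.range (t+2),
      (-1 : ℤ)^j * ((2*(t+1)).choose j : ℤ) * (((t:ℤ)+1) - j)^(2*(k+1))
      = ((t:ℤ)+1)^2 * ((-1:ℤ)^j * ((2*(t+1)).choose j : ℤ) * (((t:ℤ)+1) - j)^(2*k))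
        - (-1:ℤ)^j * ((2*(t+1)).choose j : ℤ) * (j:ℤ) * (2*(t:ℤ)+2 - j) * (((t:ℤ)+1) - j)^(2*k) := by
    intro j hj
    have he : 2*(k+1) = 2*k+2 := by ring
    rw [he, pow_add]; ring
  rw [Finset.sum_congr rfl expand, Finset.sum_sub_distrib, ← Finset.mul_sum]
  have key : ∑ j ∈ Finset.range (t+2),
      (-1:ℤ)^j * ((2*(t+1)).choose j : ℤ) * (j:ℤ) * (2*(t:ℤ)+2 - j) * (((t:ℤ)+1) - j)^(2*k)
      = -(2*((t:ℤ)+1)*(2*(t:ℤ)+1)) * ∑ j ∈ Finset.range (t+1),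
          (-1:ℤ)^j * ((2*t).choose j : ℤ) * ((t:ℤ) - j)^(2*k) := by
    rw [Finset.sum_range_succ']
    have h0 : (-1:ℤ)^0 * ((2*(t+1)).choose 0 : ℤ) * ((0:ℕ):ℤ) * (2*(t:ℤ)+2 - (0:ℕ)) * (((t:ℤ)+1) - (0:ℕ))^(2*k) = 0 := by
      simp
    rw [h0, add_zero, Finset.mul_sum]
    refine Finset.sum_congr rfl fun j hj => ?_
    have hjt : j ≤ t := by simpa [Nat.lt_succ_iff] using hj
    have hc : ((2*(t+1)).choose (j+1) * (j+1) * (2*t+1-j) : ℕ)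
        = (2*t+2) * ((2*t+1) * (2*t).choose j) := by
      have := choose_aux t j
      have e : 2*(t+1) = 2*t+2 := by ring
      rw [e]; exact this
    have hcast : ((2*(t+1)).choose (j+1) : ℤ) * ((j:ℤ)+1) * (2*(t:ℤ)+1-(j:ℤ))
        = (2*(t:ℤ)+2) * ((2*(t:ℤ)+1) * ((2*t).choose j : ℤ)) := by
      have h := congrArg (fun n : ℕ => (n : ℤ)) hc
      push_cast [Nat.cast_sub (show j ≤ 2*t+1 by omega)] at h
      linear_combination h
    push_cast
    have e1 : 2*(t:ℤ)+2 - ((j:ℤ)+1) = 2*(t:ℤ)+1-(j:ℤ) := by ring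
    have e2 : (t:ℤ)+1 - ((j:ℤ)+1) = (t:ℤ) - j := by ring
    rw [e1, e2]
    calc (-1:ℤ)^(j+1) * ((2*(t+1)).choose (j+1) : ℤ) * ((j:ℤ)+1) * (2*(t:ℤ)+1-(j:ℤ)) * ((t:ℤ)-j)^(2*k)
        = (-1:ℤ)^(j+1) * (((2*(t+1)).choose (j+1) : ℤ) * ((j:ℤ)+1) * (2*(t:ℤ)+1-(j:ℤ))) * ((t:ℤ)-j)^(2*k) := by ring
      _ = (-1:ℤ)^(j+1) * ((2*(t:ℤ)+2) * ((2*(t:ℤ)+1) * ((2*t).choose j : ℤ))) * ((t:ℤ)-j)^(2*k) := by rw [hcast]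
      _ = -(2*((t:ℤ)+1)*(2*(t:ℤ)+1)) * ((-1:ℤ)^j * ((2*t).choose j : ℤ) * ((t:ℤ)-j)^(2*k)) := by
          rw [pow_succ]; ring
  rw [key]
  ring

lemma alt_sum_poly : ∀ (n : ℕ) (p : Polynomial ℤ), p.degree < n →
    ∑ j ∈ Finset.range (n+1), (-1:ℤ)^j * (n.choose j : ℤ) * p.eval (j:ℤ) = 0 := by
  intro n
  induction n with
  | zero =>
    intro p hp
    have hp0 : p = 0 := by
      rw [← Polynomial.degree_eq_bot]
      exact Nat.WithBot.lt_zero_iff.mp (by simpa using hp)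
    simp [hp0]
  | succ n ih =>
    intro p hp
    set q : Polynomial ℤ := p - p.comp (X + C 1) with hq_def
    have hq : q.degree < n := by
      by_cases hp0 : p = 0
      · have : q = 0 := by simp [hq_def, hp0]
        rw [this, Polynomial.degree_zero]
        exact_mod_cast WithBot.bot_lt_coe n
      · have hX : (X + C (1:ℤ)).natDegree = 1 := Polynomial.natDegree_X_add_C 1
        have hXl : (X + C (1:ℤ)).leadingCoeff = 1 := Polynomial.leadingCoeff_X_add_C 1
        have hlc : (p.comp (X + C 1)).leadingCoeff = p.leadingCoeff := by
          rw [Polynomial.leadingCoeff_comp (by rw [hX]; omega), hXl, one_pow, mul_one]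
        have hc0 : p.comp (X + C 1) ≠ 0 := by
          intro h
          apply hp0
          have := Polynomial.leadingCoeff_eq_zero.mpr h
          rw [hlc] at this
          exact Polynomial.leadingCoeff_eq_zero.mp this
        have hnd : (p.comp (X + C 1)).natDegree = p.natDegree := by
          rw [Polynomial.natDegree_comp, hX, mul_one]
        have hdeg : (p.comp (X + C 1)).degree = p.degree := by
          rw [Polynomial.degree_eq_natDegree hc0, Polynomial.degree_eq_natDegree hp0, hnd]
        have h1 : q.degree < p.degree :=
          Polynomial.degree_sub_lt hdeg.symm hp0 hlc.symm
        have h2 : p.degree ≤ n := by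
          rw [← Polynomial.natDegree_le_iff_degree_le]
          have := (Polynomial.natDegree_lt_iff_degree_lt hp0).mpr hp
          omega
        exact lt_of_lt_of_le h1 h2
    have heval : ∀ i : ℕ, q.eval (i:ℤ) = p.eval (i:ℤ) - p.eval ((i:ℤ)+1) := by
      intro i
      simp [hq_def, Polynomial.eval_comp]
    set f : ℕ → ℤ := fun j => (-1:ℤ)^j * ((n+1).choose j : ℤ) * p.eval (j:ℤ) with hf
    set g : ℕ → ℤ := fun j => (-1:ℤ)^j * (n.choose j : ℤ) * p.eval (j:ℤ) with hg
    have key : ∑ j ∈ Finset.range (n+2), f j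
        = ∑ i ∈ Finset.range (n+1), (-1:ℤ)^i * (n.choose i : ℤ) * q.eval (i:ℤ) := by
      calc ∑ j ∈ Finset.range (n+2), f j
          = ∑ i ∈ Finset.range (n+1), f (i+1) + f 0 := Finset.sum_range_succ' f (n+1)
        _ = (∑ i ∈ Finset.range (n+1),
              (-((-1:ℤ)^i * (n.choose i : ℤ) * p.eval ((i:ℤ)+1)) + g (i+1))) + g 0 := by
            congr 1
            · refine Finset.sum_congr rfl fun i hi => ?_
              simp only [hf, hg, Nat.choose_succ_succ]
              push_cast
              ring
            · simp [hf, hg]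
        _ = ∑ i ∈ Finset.range (n+1), -((-1:ℤ)^i * (n.choose i : ℤ) * p.eval ((i:ℤ)+1))
            + (∑ i ∈ Finset.range (n+1), g (i+1) + g 0) := by
            rw [Finset.sum_add_distrib]; ring
        _ = ∑ i ∈ Finset.range (n+1), -((-1:ℤ)^i * (n.choose i : ℤ) * p.eval ((i:ℤ)+1))
            + ∑ j ∈ Finset.range (n+2), g j := by rw [← Finset.sum_range_succ' g (n+1)]
        _ = ∑ i ∈ Finset.range (n+1), -((-1:ℤ)^i * (n.choose i : ℤ) * p.eval ((i:ℤ)+1))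
            + ∑ j ∈ Finset.range (n+1), g j := by
            congr 1
            rw [Finset.sum_range_succ]
            have hgz : g (n+1) = 0 := by simp [hg, Nat.choose_succ_self]
            rw [hgz, add_zero]
        _ = ∑ i ∈ Finset.range (n+1), (-1:ℤ)^i * (n.choose i : ℤ) * q.eval (i:ℤ) := by
            rw [← Finset.sum_add_distrib]
            refine Finset.sum_congr rfl fun i hi => ?_
            rw [heval i]
            simp only [hg]
            ring
    rw [show n+1+1 = n+2 from rfl]
    rw [key, ih q hq]

lemma R_eq_zero (k m : ℕ) (hk : 1 ≤ k) (hkm : k < m) : R k m = 0 := by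
  set h : ℕ → ℤ := fun j => (-1:ℤ)^j * ((2*m).choose j : ℤ) * ((m:ℤ) - j)^(2*k) with hh
  have hm : 1 ≤ m := by omega
  -- the full alternating sum vanishes
  have hfull : ∑ j ∈ Finset.range (2*m+1), h j = 0 := by
    set p : Polynomial ℤ := (C (m:ℤ) - X)^(2*k) with hp
    have hdeg : p.degree < (2*m : ℕ) := by
      have h1 : (C (m:ℤ) - X).degree = 1 := by
        rw [show C (m:ℤ) - X = -(X - C (m:ℤ)) by ring, Polynomial.degree_neg,
          Polynomial.degree_X_sub_C]
      rw [hp, Polynomial.degree_pow, h1]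
      have e : (2*k) • (1 : WithBot ℕ) = ((2*k : ℕ) : WithBot ℕ) := by simp
      rw [e]
      exact_mod_cast (by omega : 2*k < 2*m)
    have := alt_sum_poly (2*m) p hdeg
    rw [← this]
    refine Finset.sum_congr rfl fun j hj => ?_
    simp [hh, hp]
  -- h (2m - j) = h j for j < m
  have hrefl : ∀ j, j < m → h (2*m - j) = h j := by
    intro j hj
    simp only [hh]
    have e1 : (-1:ℤ)^(2*m-j) = (-1:ℤ)^j := by
      rw [show 2*m - j = 2*(m-j) + j by omega, pow_add, pow_mul]
      simp
    have e2 : (2*m).choose (2*m-j) = (2*m).choose j := Nat.choose_symm (by omega)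
    have e3 : ((m:ℤ) - ((2*m-j : ℕ) : ℤ))^(2*k) = ((m:ℤ) - j)^(2*k) := by
      rw [Nat.cast_sub (by omega : j ≤ 2*m)]
      rw [show (m:ℤ) - (((2*m:ℕ):ℤ) - j) = -((m:ℤ) - j) by push_cast; ring]
      exact Even.neg_pow (even_two_mul k) _
    rw [e1, e2, e3]
  -- split full sum
  have hsplit : ∑ j ∈ Finset.range (2*m+1), h j
      = ∑ j ∈ Finset.range (m+1), h j + ∑ j ∈ Finset.range m, h (2*m - j) := by
    have h1 : ∑ j ∈ Finset.range (2*m+1), h j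
        = ∑ j ∈ Finset.range (m+1), h j + ∑ j ∈ Finset.Ico (m+1) (2*m+1), h j := by
      simp only [Finset.range_eq_Ico]
      exact (Finset.sum_Ico_consecutive h (by omega : 0 ≤ m+1) (by omega : m+1 ≤ 2*m+1)).symm
    have h2 : ∑ j ∈ Finset.Ico (m+1) (2*m+1), h j = ∑ i ∈ Finset.range m, h (m+1+i) := by
      rw [Finset.sum_Ico_eq_sum_range, show 2*m+1-(m+1) = m by omega]
    have h3 : ∑ i ∈ Finset.range m, h (m+1+i) = ∑ i ∈ Finset.range m, h (2*m - i) := by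
      rw [← Finset.sum_range_reflect (fun i => h (m+1+i)) m]
      refine Finset.sum_congr rfl fun i hi => ?_
      congr 1
      have : i < m := Finset.mem_range.mp hi
      omega
    rw [h1, h2, h3]
  have hmid : h m = 0 := by
    have e : ((m:ℤ) - (m:ℕ)) = 0 := sub_self _
    simp [hh, e, zero_pow (show 2*k ≠ 0 by omega)]
  have hRsum : ∑ j ∈ Finset.range m, h (2*m-j) = ∑ j ∈ Finset.range (m+1), h j := by
    rw [Finset.sum_congr rfl (fun j hj => hrefl j (Finset.mem_range.mp hj)),
      Finset.sum_range_succ, hmid, add_zero]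
  have : 2 * ∑ j ∈ Finset.range (m+1), h j = 0 := by
    rw [hsplit, hRsum] at hfull
    linarith
  have hz : ∑ j ∈ Finset.range (m+1), h j = 0 := by omega
  rw [R_int]
  exact hz

noncomputable def Qp (t : ℕ) (x : ℚ) : ℚ := x * ∏ j ∈ Finset.range t, (x^2 - ((j:ℚ)+1)^2)

lemma Qp_succ (t : ℕ) (x : ℚ) : Qp (t+1) x = Qp t x * (x^2 - ((t:ℚ)+1)^2) := by
  unfold Qp
  rw [Finset.prod_range_succ]
  ring

lemma fac_ne (n : ℕ) : ((n.factorial : ℚ)) ≠ 0 := by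
  exact_mod_cast Nat.factorial_ne_zero n

lemma c_rec (k t : ℕ) :
    2*(R (k+1) (t+1) : ℚ)/((2*t+2).factorial)
      = 2*(R k t : ℚ)/((2*t).factorial)
        + ((t:ℚ)+1)^2 * (2*(R k (t+1) : ℚ)/((2*t+2).factorial)) := by
  have hr := R_rec k t
  have hrq : (R (k+1) (t+1) : ℚ)
      = 2*((t:ℚ)+1)*(2*(t:ℚ)+1) * (R k t : ℚ) + ((t:ℚ)+1)^2 * (R k (t+1) : ℚ) := by
    exact_mod_cast congrArg (fun z : ℤ => (z : ℚ)) hr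
  have hf : ((2*t+2).factorial : ℚ) = (2*(t:ℚ)+2) * ((2*(t:ℚ)+1) * ((2*t).factorial : ℚ)) := by
    rw [show 2*t+2 = (2*t+1)+1 from rfl, Nat.factorial_succ, Nat.factorial_succ]
    push_cast
    ring
  rw [hrq, hf]
  have h1 := fac_ne (2*t)
  field_simp

lemma claimA : ∀ k, 1 ≤ k → ∀ x : ℚ,
    x^(2*k-1) = ∑ t ∈ Finset.range k, 2*(R k (t+1) : ℚ)/((2*t+2).factorial) * Qp t x := by
  intro k hk
  induction k, hk using Nat.le_induction with
  | base =>
    intro x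
    simp [Qp, R_one_one]
  | succ k hk ih =>
    intro x
    have hx : x^(2*(k+1)-1) = x^(2*k-1) * x^2 := by
      rw [← pow_add]
      congr 1
      omega
    rw [hx, ih x, Finset.sum_mul]
    have step : ∀ t ∈ Finset.range k,
        2*(R k (t+1) : ℚ)/((2*t+2).factorial) * Qp t x * x^2
        = 2*(R k (t+1) : ℚ)/((2*t+2).factorial) * Qp (t+1) x
          + ((t:ℚ)+1)^2 * (2*(R k (t+1) : ℚ)/((2*t+2).factorial)) * Qp t x := by
      intro t ht
      rw [Qp_succ]
      ring
    rw [Finset.sum_congr rfl step, Finset.sum_add_distrib]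
    -- RHS expansion
    have rhs : ∑ t ∈ Finset.range (k+1), 2*(R (k+1) (t+1) : ℚ)/((2*t+2).factorial) * Qp t x
        = ∑ t ∈ Finset.range (k+1),
            (2*(R k t : ℚ)/((2*t).factorial) * Qp t x
              + ((t:ℚ)+1)^2 * (2*(R k (t+1) : ℚ)/((2*t+2).factorial)) * Qp t x) := by
      refine Finset.sum_congr rfl fun t ht => ?_
      rw [c_rec k t]
      ring
    rw [rhs, Finset.sum_add_distrib]
    congr 1
    · -- first sums: shift
      rw [Finset.sum_range_succ' (fun t => 2*(R k t : ℚ)/((2*t).factorial) * Qp t x) k]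
      have h0 : 2*(R k 0 : ℚ)/((2*0).factorial) * Qp 0 x = 0 := by
        rw [R_zero k hk]
        norm_num
      rw [h0, add_zero]
      refine Finset.sum_congr rfl fun t ht => ?_
      have e : 2*(t+1) = 2*t+2 := by omega
      rw [e]
    · -- second sums: top term vanishes
      rw [Finset.sum_range_succ]
      have hz : ((k:ℚ)+1)^2 * (2*(R k (k+1) : ℚ)/((2*k+2).factorial)) * Qp k x = 0 := by
        rw [R_eq_zero k (k+1) hk (by omega)]
        norm_num
      rw [hz, add_zero]

lemma claimB (i : ℕ) (hi : 1 ≤ i) : ∀ t : ℕ,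
    Qp t (2*(i:ℚ)) = ((2*t+1).factorial : ℚ) * ((2*i+t).choose (2*t+1) : ℚ) := by
  intro t
  induction t with
  | zero =>
    simp [Qp, Nat.choose_one_right]
  | succ t ih =>
    rw [Qp_succ, ih]
    by_cases h2i : t+1 ≤ 2*i
    · have hsub : (2*t+1) ≤ 2*i+t := by omega
      have hn1 : ((2*i+t+1) * ((2*i+t).choose (2*t+2)) : ℕ)
          = (2*i+t+1).choose (2*t+3) * (2*t+3) := by
        simpa using Nat.add_one_mul_choose_eq (2*i+t) (2*t+2)
      have hn2 : ((2*i+t).choose (2*t+2) * (2*t+2) : ℕ)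
          = (2*i+t).choose (2*t+1) * (2*i+t - (2*t+1)) := by
        simpa using Nat.choose_succ_right_eq (2*i+t) (2*t+1)
      have hq1 : ((2*(i:ℚ))+(t:ℚ)+1) * ((2*i+t).choose (2*t+2) : ℚ)
          = ((2*i+t+1).choose (2*t+3) : ℚ) * (2*(t:ℚ)+3) := by
        exact_mod_cast congrArg (fun n : ℕ => (n:ℚ)) hn1
      have hq2 : ((2*i+t).choose (2*t+2) : ℚ) * (2*(t:ℚ)+2)
          = ((2*i+t).choose (2*t+1) : ℚ) * (2*(i:ℚ) - (t:ℚ) - 1) := by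
        have := congrArg (fun n : ℕ => (n:ℚ)) hn2
        push_cast [Nat.cast_sub hsub] at this
        convert this using 1
        push_cast
        ring
      have hfac : (((2*(t+1)+1).factorial : ℕ) : ℚ)
          = (2*(t:ℚ)+3) * ((2*(t:ℚ)+2) * ((2*t+1).factorial : ℚ)) := by
        rw [show 2*(t+1)+1 = (2*t+2)+1 by omega, Nat.factorial_succ,
          show 2*t+2 = (2*t+1)+1 from rfl, Nat.factorial_succ]
        push_cast
        ring
      have hch : (2*i+(t+1)) = 2*i+t+1 := by omega
      rw [hch, show 2*(t+1)+1 = 2*t+3 by omega] at *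
      rw [show (((2*t+3).factorial : ℕ) : ℚ)
          = (2*(t:ℚ)+3) * ((2*(t:ℚ)+2) * ((2*t+1).factorial : ℚ)) by
        rw [show 2*t+3 = (2*t+2)+1 from rfl, Nat.factorial_succ,
          show 2*t+2 = (2*t+1)+1 from rfl, Nat.factorial_succ]
        push_cast; ring]
      have hexp : (2*(i:ℚ))^2 - ((t:ℚ)+1)^2 = (2*(i:ℚ)+(t:ℚ)+1) * (2*(i:ℚ)-(t:ℚ)-1) := by ring
      rw [hexp]
      linear_combination ((2*(t:ℚ)+2) * ((2*t+1).factorial : ℚ)) * hq1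
        - (((2*t+1).factorial : ℚ) * (2*(i:ℚ)+(t:ℚ)+1)) * hq2
    · -- degenerate case: both sides vanish
      have hc0 : (2*i+(t+1)).choose (2*(t+1)+1) = 0 :=
        Nat.choose_eq_zero_of_lt (by omega)
      rw [hc0]
      have hmem : 2*i-1 ∈ Finset.range (t+1) := Finset.mem_range.mpr (by omega)
      have hzero : (2*(i:ℚ))^2 - (((2*i-1 : ℕ):ℚ)+1)^2 = 0 := by
        rw [Nat.cast_sub (by omega : 1 ≤ 2*i)]
        push_cast
        ring
      have : Qp (t+1) (2*(i:ℚ)) = 0 := by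
        unfold Qp
        rw [Finset.prod_eq_zero hmem hzero, mul_zero]
      rw [Qp_succ] at this
      rw [ih] at this
      rw [this]
      simp

lemma pointwise (k i : ℕ) (hk : 1 ≤ k) (hi : 1 ≤ i) :
    (2*(i:ℚ))^(2*k-1)
      = ∑ m ∈ Finset.Icc 1 k, (R k m : ℚ) * ((2*i+m-1).choose (2*m-1) : ℚ) / m := by
  rw [claimA k hk (2*(i:ℚ))]
  have hIcc : ∑ m ∈ Finset.Icc 1 k, (R k m : ℚ) * ((2*i+m-1).choose (2*m-1) : ℚ) / m
      = ∑ t ∈ Finset.range k, (R k (1+t) : ℚ) * ((2*i+(1+t)-1).choose (2*(1+t)-1) : ℚ) / (1+t : ℕ) := by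
    rw [← Finset.Ico_add_one_right_eq_Icc, Finset.sum_Ico_eq_sum_range,
      show k+1-1 = k from rfl]
  rw [hIcc]
  refine Finset.sum_congr rfl fun t ht => ?_
  rw [claimB i hi t]
  have e1 : 2*i+(1+t)-1 = 2*i+t := by omega
  have e2 : 2*(1+t)-1 = 2*t+1 := by omega
  rw [e1, e2]
  have hf : ((2*t+2).factorial : ℚ) = (2*(t:ℚ)+2) * ((2*t+1).factorial : ℚ) := by
    rw [show 2*t+2 = (2*t+1)+1 from rfl, Nat.factorial_succ]
    push_cast
    ring
  rw [hf]
  have h1 : ((2*t+1).factorial : ℚ) ≠ 0 := fac_ne _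
  have h2 : (2*(t:ℚ)+2) ≠ 0 := by positivity
  have h3 : ((1+t : ℕ) : ℚ) ≠ 0 := by positivity
  field_simp
  push_cast
  ring


theorem stmt_11 (k n : ℕ) (hk : 1 ≤ k) (hn : 1 ≤ n) :
    (2 ^ (2 * k - 1) * S (2 * k - 1) n : ℚ) =
      ∑ m ∈ Finset.Icc 1 k, (R k m : ℚ) * (F m n : ℚ) / (m : ℚ) := by
  have hL : (2 ^ (2*k-1) * S (2*k-1) n : ℚ) = ∑ i ∈ Finset.Icc 1 n, (2*(i:ℚ))^(2*k-1) := by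
    unfold S
    push_cast
    rw [Finset.mul_sum]
    refine Finset.sum_congr rfl fun i hi => ?_
    rw [mul_pow]
  rw [hL]
  have hF : ∀ m : ℕ, (F m n : ℚ) = ∑ i ∈ Finset.Icc 1 n, ((2*i+m-1).choose (2*m-1) : ℚ) := by
    intro m
    unfold F
    push_cast
    rfl
  calc ∑ i ∈ Finset.Icc 1 n, (2*(i:ℚ))^(2*k-1)
      = ∑ i ∈ Finset.Icc 1 n, ∑ m ∈ Finset.Icc 1 k,
          (R k m : ℚ) * ((2*i+m-1).choose (2*m-1) : ℚ) / m := by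
        refine Finset.sum_congr rfl fun i hi => ?_
        exact pointwise k i hk (Finset.mem_Icc.mp hi).1
    _ = ∑ m ∈ Finset.Icc 1 k, ∑ i ∈ Finset.Icc 1 n,
          (R k m : ℚ) * ((2*i+m-1).choose (2*m-1) : ℚ) / m := Finset.sum_comm
    _ = ∑ m ∈ Finset.Icc 1 k, (R k m : ℚ) * (F m n : ℚ) / (m : ℚ) := by
        refine Finset.sum_congr rfl fun m hm => ?_
        rw [hF m, Finset.mul_sum, Finset.sum_div]
end
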